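/- Let φ = C₁ ∧ … ∧ C_m be a monotone 3-CNF formula with zones Z_φ and Z'_φ constructed from it. For every configuration γ' satisfying the node (Z'_φ, ∅) via a surjection h', there exists a subset γ'' ⊆ γ' satisfying the node (Z_φ, ∅) if and only if the assignment α_{γ'} falsifies at least one clause of φ. -/

import Mathlib

open scoped Classical NNReal

namespace ATAPaper

/-! ## Intervals with natural endpoints (possibly unbounded) -/

inductive NInterval where
  | cc (a b : ℕ)
  | co (a b : ℕ)
  | oc (a b : ℕ)
  | oo (a b : ℕ)
  | ci (a : ℕ)
  | oi (a : ℕ)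
deriving DecidableEq

/-- Membership of a nonnegative real in an interval. -/
def NInterval.mem (v : ℝ≥0) : NInterval → Prop
  | .cc a b => (a : ℝ≥0) ≤ v ∧ v ≤ (b : ℝ≥0)
  | .co a b => (a : ℝ≥0) ≤ v ∧ v < (b : ℝ≥0)
  | .oc a b => (a : ℝ≥0) < v ∧ v ≤ (b : ℝ≥0)
  | .oo a b => (a : ℝ≥0) < v ∧ v < (b : ℝ≥0)
  | .ci a => (a : ℝ≥0) ≤ v
  | .oi a => (a : ℝ≥0) < v

/-- The largest constant appearing in an interval. -/
def NInterval.bound : NInterval → ℕ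
  | .cc a b | .co a b | .oc a b | .oo a b => max a b
  | .ci a | .oi a => a

/-! ## Transition formulas `Φ(Q)` with reset `x.φ` and deactivation `x̄.φ` -/

inductive TF (Q : Type*) where
  | tt
  | ff
  | loc (q : Q)
  | guard (I : NInterval)
  | and (φ ψ : TF Q)
  | or (φ ψ : TF Q)
  | reset (φ : TF Q)
  | deact (φ : TF Q)

/-- A state of a 1-ATA is a location together with a clock value which is
either inactive (`none` = ⊥) or a nonnegative real.  A configuration is a
finite set of states. -/
abbrev Config (Q : Type*) := Finset (Q × Option ℝ≥0)

section BasicDefs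

variable {Q A : Type*}

/-- `M ⊨_v φ`. -/
def TF.sat (M : Config Q) : TF Q → Option ℝ≥0 → Prop
  | .tt, _ => True
  | .ff, _ => False
  | .loc q, v => (q, v) ∈ M
  | .guard I, v => v = none ∨ ∃ r, v = some r ∧ I.mem r
  | .and φ ψ, v => φ.sat M v ∧ ψ.sat M v
  | .or φ ψ, v => φ.sat M v ∨ ψ.sat M v
  | .reset φ, _ => φ.sat M (some 0)
  | .deact φ, _ => φ.sat M none

/-- `M` is a minimal model of `φ` on `v`. -/
def MinModel (M : Config Q) (v : Option ℝ≥0) (φ : TF Q) : Prop :=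
  φ.sat M v ∧ ∀ M' ⊂ M, ¬ φ.sat M' v

/-- The disjuncts of a formula (assumed to be in disjunctive normal form). -/
def TF.disjuncts : TF Q → List (TF Q)
  | .or φ ψ => φ.disjuncts ++ ψ.disjuncts
  | φ => [φ]

/-- The intervals occurring (anywhere) in a transition formula. -/
def TF.guards : TF Q → List NInterval
  | .guard I => [I]
  | .and φ ψ | .or φ ψ => φ.guards ++ ψ.guards
  | .reset φ | .deact φ => φ.guards
  | _ => []

/-! ## One-clock alternating timed automata with deactivation -/

structure OneATA (Q A : Type*) where
  init : Q
  final : Set Q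
  delta : Q → A → Option (TF Q)

/-- `C` is one of the disjuncts of `δ(q,a)`. -/
def OneATA.isTarget (𝒜 : OneATA Q A) (q : Q) (a : A) (C : TF Q) : Prop :=
  ∃ φ, 𝒜.delta q a = some φ ∧ C ∈ φ.disjuncts

/-- Time elapse on a configuration: add `d` to every active value, keep `⊥`. -/
noncomputable def Config.delay (γ : Config Q) (d : ℝ≥0) : Config Q :=
  γ.image (fun s => (s.1, s.2.map (· + d)))

/-- Discrete transition `γ →^{a,C} γ'` where the target `χ` assigns to each
state of `γ` a disjunct of the corresponding transition formula. -/
def OneATA.DStep (𝒜 : OneATA Q A) (γ : Config Q) (a : A)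
    (χ : Q × Option ℝ≥0 → TF Q) (γ' : Config Q) : Prop :=
  (∀ s ∈ γ, 𝒜.isTarget s.1 a (χ s)) ∧
  ∃ Mo : Q × Option ℝ≥0 → Config Q,
    (∀ s ∈ γ, MinModel (Mo s) s.2 (χ s)) ∧ γ' = γ.biUnion Mo

/-- Combined transition `γ →^{d,a,C} γ'`. -/
def OneATA.Step (𝒜 : OneATA Q A) (γ : Config Q) (d : ℝ≥0) (a : A)
    (χ : Q × Option ℝ≥0 → TF Q) (γ' : Config Q) : Prop :=
  𝒜.DStep (γ.delay d) a χ γ'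

/-- A configuration is accepting if all its locations are accepting. -/
def OneATA.AcceptingCfg (𝒜 : OneATA Q A) (γ : Config Q) : Prop :=
  ∀ s ∈ γ, s.1 ∈ 𝒜.final

/-- Accepting runs on (finite) timed words. -/
inductive OneATA.AccRun (𝒜 : OneATA Q A) : Config Q → List (ℝ≥0 × A) → Prop
  | nil {γ} : 𝒜.AcceptingCfg γ → 𝒜.AccRun γ []
  | cons {γ γ' : Config Q} {d : ℝ≥0} {a : A} {w : List (ℝ≥0 × A)}
      (χ : Q × Option ℝ≥0 → TF Q) :
      𝒜.Step γ d a χ γ' → 𝒜.AccRun γ' w → 𝒜.AccRun γ ((d, a) :: w)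

/-- The language of a 1-ATA. -/
def OneATA.Lang (𝒜 : OneATA Q A) : Set (List (ℝ≥0 × A)) :=
  {w | 𝒜.AccRun {(𝒜.init, some 0)} w}

/-- Reachability between configurations by timed and discrete transitions. -/
inductive OneATA.Reach (𝒜 : OneATA Q A) : Config Q → Config Q → Prop
  | refl (γ) : 𝒜.Reach γ γ
  | delay {γ γ'} (d : ℝ≥0) : 𝒜.Reach γ γ' → 𝒜.Reach γ (γ'.delay d)
  | step {γ γ' γ''} (a : A) (χ) : 𝒜.Reach γ γ' → 𝒜.DStep γ' a χ γ'' → 𝒜.Reach γ γ''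

/-- The width of a configuration: the number of active states. -/
noncomputable def Config.width (γ : Config Q) : ℕ :=
  (γ.filter (fun s => s.2 ≠ none)).card

/-- The 1-ATA has width at most `k`. -/
def OneATA.WidthBounded (𝒜 : OneATA Q A) (k : ℕ) : Prop :=
  ∀ γ, 𝒜.Reach {(𝒜.init, some 0)} γ → γ.width ≤ k

/-- All constants appearing in the automaton are at most `M`. -/
def OneATA.BoundedBy (𝒜 : OneATA Q A) (M : ℕ) : Prop :=
  ∀ q a φ, 𝒜.delta q a = some φ → ∀ I ∈ φ.guards, I.bound ≤ M

/-! ## Region equivalence and entailment on configurations -/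

/-- `γ ≃_M γ'` via the bijection `h`. -/
def RegionEquivWith (M : ℕ) (γ γ' : Config Q)
    (h : Q × Option ℝ≥0 → Q × Option ℝ≥0) : Prop :=
  Set.BijOn h ↑γ ↑γ' ∧
  (∀ s ∈ γ, (h s).1 = s.1) ∧
  (∀ s ∈ γ, ((h s).2 = none ↔ s.2 = none)) ∧
  (∀ s ∈ γ, ∀ r r', s.2 = some r → (h s).2 = some r' →
    ((r ≤ (M : ℝ≥0)) ↔ (r' ≤ (M : ℝ≥0))) ∧
    (r ≤ (M : ℝ≥0) →
      (⌊(r : ℝ)⌋ = ⌊(r' : ℝ)⌋ ∧ (Int.fract (r : ℝ) = 0 ↔ Int.fract (r' : ℝ) = 0)))) ∧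
  (∀ s₁ ∈ γ, ∀ s₂ ∈ γ, ∀ r₁ r₂ r₁' r₂',
    s₁.2 = some r₁ → s₂.2 = some r₂ → (h s₁).2 = some r₁' → (h s₂).2 = some r₂' →
    r₁ ≤ (M : ℝ≥0) → r₂ ≤ (M : ℝ≥0) →
    (Int.fract (r₁ : ℝ) ≤ Int.fract (r₂ : ℝ) ↔ Int.fract (r₁' : ℝ) ≤ Int.fract (r₂' : ℝ)))

/-- Region equivalence `γ ≃_M γ'`. -/
def RegionEquiv (M : ℕ) (γ γ' : Config Q) : Prop := ∃ h, RegionEquivWith M γ γ' h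

/-- Configuration entailment `γ ⊨_M γ'` : some subset of `γ'` is region equivalent
to `γ`. -/
def CfgEntails (M : ℕ) (γ γ' : Config Q) : Prop :=
  ∃ γ'' ⊆ γ', RegionEquiv M γ γ''

end BasicDefs


/-! ## MTL (negation normal form) -/

inductive MTL (A : Type*) where
  | atom (a : A)
  | natom (a : A)
  | conj (φ ψ : MTL A)
  | disj (φ ψ : MTL A)
  | next (I : NInterval) (φ : MTL A)
  | untl (I : NInterval) (φ ψ : MTL A)

section MTLDefs

variable {A : Type*}

/-- Accumulated time `Σ_{c=1}^{p} d_c` of the first `p` letters of a timed word. -/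
def twtime (w : List (ℝ≥0 × A)) (p : ℕ) : ℝ≥0 := ((w.take p).map Prod.fst).sum

/-- `(w, i) ⊨ φ` (positions are 0-based). -/
def MTL.holdsAt (w : List (ℝ≥0 × A)) : MTL A → ℕ → Prop
  | .atom a, i => ∃ h : i < w.length, (w.get ⟨i, h⟩).2 = a
  | .natom a, i => ∃ h : i < w.length, (w.get ⟨i, h⟩).2 ≠ a
  | .conj φ ψ, i => φ.holdsAt w i ∧ ψ.holdsAt w i
  | .disj φ ψ, i => φ.holdsAt w i ∨ ψ.holdsAt w i
  | .next I φ, i => ∃ h : i + 1 < w.length, φ.holdsAt w (i + 1) ∧ I.mem (w.get ⟨i + 1, h⟩).1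
  | .untl I φ ψ, i => ∃ k, i ≤ k ∧ k < w.length ∧ ψ.holdsAt w k ∧
      I.mem (twtime w (k + 1) - twtime w (i + 1)) ∧
      ∀ j, i ≤ j → j < k → φ.holdsAt w j

/-- The language of an MTL formula (`w ⊨ φ` iff `φ` holds at the first position). -/
def MTL.Lang (φ : MTL A) : Set (List (ℝ≥0 × A)) := {w | φ.holdsAt w 0}

/-- Pure LTL formulas: every interval is `[0, ∞)`. -/
def MTL.isPure : MTL A → Bool
  | .atom _ | .natom _ => true
  | .conj φ ψ | .disj φ ψ => φ.isPure && ψ.isPure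
  | .next I φ => decide (I = NInterval.ci 0) && φ.isPure
  | .untl I φ ψ => decide (I = NInterval.ci 0) && φ.isPure && ψ.isPure

/-- The subformulas of an MTL formula. -/
def MTL.subfs : MTL A → List (MTL A)
  | .atom a => [.atom a]
  | .natom a => [.natom a]
  | .conj φ ψ => .conj φ ψ :: (φ.subfs ++ ψ.subfs)
  | .disj φ ψ => .disj φ ψ :: (φ.subfs ++ ψ.subfs)
  | .next I φ => .next I φ :: φ.subfs
  | .untl I φ ψ => .untl I φ ψ :: (φ.subfs ++ ψ.subfs)

/-- One-sided MTL: in every Until, the left argument is a pure LTL formula. -/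
def MTL.oneSided : MTL A → Prop
  | .atom _ | .natom _ => True
  | .conj φ ψ | .disj φ ψ => φ.oneSided ∧ ψ.oneSided
  | .next _ φ => φ.oneSided
  | .untl _ φ ψ => φ.isPure = true ∧ ψ.oneSided

/-! ## The MTL-to-1-ATA construction with deactivation -/

/-- Locations of the constructed automaton: the initial location `φ_init`,
locations for formulas (in particular Until subformulas and `φ` itself), and
locations `(X_I ψ)ʳ`. -/
inductive MLoc (A : Type*) where
  | start
  | form (ψ : MTL A)
  | nextr (I : NInterval) (ψ : MTL A)

/-- Prefix `x̄.` if `ψ` is pure LTL, and nothing otherwise. -/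
def barP (ψ : MTL A) (φ : TF (MLoc A)) : TF (MLoc A) :=
  if ψ.isPure then .deact φ else φ

/-- Prefix `x̄.` if `ψ` is pure LTL, and `x.` otherwise. -/
def rhoP (ψ : MTL A) (φ : TF (MLoc A)) : TF (MLoc A) :=
  if ψ.isPure then .deact φ else .reset φ

variable [DecidableEq A]

/-- The transition formula `δ(ψ, a)` for subformulas `ψ`. -/
def dform : MTL A → A → TF (MLoc A)
  | .atom b, a => if b = a then .tt else .ff
  | .natom b, a => if b = a then .ff else .tt
  | .conj φ ψ, a => .and (barP φ (dform φ a)) (barP ψ (dform ψ a))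
  | .disj φ ψ, a => .or (barP φ (dform φ a)) (barP ψ (dform ψ a))
  | .next I ψ, _ => .reset (.loc (.nextr I ψ))
  | .untl I φ ψ, a =>
      .or (.and (rhoP ψ (dform ψ a)) (.guard I))
          (.and (rhoP φ (dform φ a)) (.loc (.form (.untl I φ ψ))))

/-- The transition function of the constructed automaton `A'_φ`. -/
def mlocDelta (φ₀ : MTL A) : MLoc A → A → Option (TF (MLoc A))
  | .start, a => some (rhoP φ₀ (dform φ₀ a))
  | .form ψ, a => some (dform ψ a)
  | .nextr I ψ, a => some (.and (.guard I) (rhoP ψ (dform ψ a)))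

/-- The 1-ATA `A'_φ` constructed from an MTL formula `φ`:
initial location `φ_init`, no accepting locations. -/
def ataOf (φ : MTL A) : OneATA (MLoc A) A :=
  { init := .start, final := ∅, delta := mlocDelta φ }

end MTLDefs

section KB
variable {A : Type*}
/-- The recursive width bound `k_ψ`. -/
def kBound : MTL A → ℕ
  | .atom _ | .natom _ => 1
  | .conj φ ψ => if (MTL.conj φ ψ).isPure then 1 else kBound φ + kBound ψ
  | .disj φ ψ => if (MTL.disj φ ψ).isPure then 1 else max (kBound φ) (kBound ψ)
  | .next I φ => if (MTL.next I φ).isPure then 1 else kBound φ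
  | .untl I φ ψ => if (MTL.untl I φ ψ).isPure then 1 else kBound ψ
end KB


/-! ## Zones (variables `x_{q,i}`), nodes and their configuration semantics -/

section ZoneDefs

variable {Q A : Type*}

/-- A (semantic) zone: a finite set of variables `x_{q,i}` together with the
set of valuations satisfying its constraints. -/
structure SemZone (Q : Type*) where
  vars : Finset (Q × ℕ)
  val : ((Q × ℕ) → ℝ≥0) → Prop

/-- `γ` satisfies the node `(Z, IA)` via the surjection `h`. -/
def NodeSatVia (Z : SemZone Q) (IA : Finset (Q × ℕ)) (γ : Config Q)
    (h : Q × ℕ → Q × Option ℝ≥0) : Prop :=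
  (∀ y ∈ Z.vars ∪ IA, (h y).1 = y.1) ∧
  (∀ y ∈ Z.vars ∪ IA, h y ∈ γ) ∧
  (∀ s ∈ γ, ∃ y ∈ Z.vars ∪ IA, h y = s) ∧
  (∀ y ∈ IA, (h y).2 = none) ∧
  ∃ ν : (Q × ℕ) → ℝ≥0, (∀ y ∈ Z.vars, (h y).2 = some (ν y)) ∧ Z.val ν

/-- `γ ∈ ⟦(Z, IA)⟧`. -/
def NodeSat (Z : SemZone Q) (IA : Finset (Q × ℕ)) (γ : Config Q) : Prop :=
  ∃ h, NodeSatVia Z IA γ h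

/-- The special empty node `(Z_∅, {})`, satisfied exactly by the empty
configuration. -/
def emptySemZone {Q : Type*} : SemZone Q := ⟨∅, fun _ => True⟩

/-- The initial node `((x_{q₀,1} = 0), ∅)`. -/
def initSemZone (𝒜 : OneATA Q A) : SemZone Q :=
  ⟨{(𝒜.init, 1)}, fun ν => ν (𝒜.init, 1) = 0⟩

/-! ### Simple clauses and the successor computation -/

/-- A clause is a conjunction of atoms of the form `true`, `false`, `q`, `I`,
`x.q`, `x̄.q`. -/
def TF.isSimpleConj : TF Q → Bool
  | .tt => true
  | .ff => true
  | .loc _ => true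
  | .guard _ => true
  | .reset (.loc _) => true
  | .deact (.loc _) => true
  | .and φ ψ => φ.isSimpleConj && ψ.isSimpleConj
  | _ => false

/-- Every transition formula of the automaton is in disjunctive normal form. -/
def OneATA.normalized (𝒜 : OneATA Q A) : Prop :=
  ∀ q a φ, 𝒜.delta q a = some φ → ∀ C ∈ φ.disjuncts, C.isSimpleConj = true

/-- The interval atoms of a clause. -/
def TF.topGuards : TF Q → List NInterval
  | .guard I => [I]
  | .and φ ψ => φ.topGuards ++ ψ.topGuards
  | _ => []

/-- The location atoms `q` of a clause. -/
def TF.atomLocs : TF Q → List Q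
  | .loc q => [q]
  | .and φ ψ => φ.atomLocs ++ ψ.atomLocs
  | _ => []

/-- The reset atoms `x.q` of a clause. -/
def TF.resetLocs : TF Q → List Q
  | .reset (.loc q) => [q]
  | .and φ ψ => φ.resetLocs ++ ψ.resetLocs
  | _ => []

/-- The deactivation atoms `x̄.q` of a clause. -/
def TF.deactLocs : TF Q → List Q
  | .deact (.loc q) => [q]
  | .and φ ψ => φ.deactLocs ++ ψ.deactLocs
  | _ => []

/-- The inactive variable set of the successor node: `x'_{q,0}` for every atom
`x̄.q`, and for every atom `q` of a clause of an inactive variable. -/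
noncomputable def succIA (Z : SemZone Q) (IA : Finset (Q × ℕ))
    (T : Q × ℕ → TF Q) : Finset (Q × ℕ) :=
  ((Z.vars ∪ IA).biUnion fun y => ((T y).deactLocs.toFinset).image fun q => (q, 0)) ∪
  (IA.biUnion fun y => ((T y).atomLocs.toFinset).image fun q => (q, 0))

/-- Number of active variables whose clause contains the atom `q`. -/
noncomputable def copyCount (Z : SemZone Q) (T : Q × ℕ → TF Q) (q : Q) : ℕ :=
  (Z.vars.filter fun y => q ∈ (T y).atomLocs).card

/-- The active variable set of the successor node: `x'_{q,1}` for resets, and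
fresh variables `x'_{q,ℓ}` with `2 ≤ ℓ` (smallest free indices) for atoms `q`
of clauses of active variables. -/
noncomputable def succVars (Z : SemZone Q) (IA : Finset (Q × ℕ))
    (T : Q × ℕ → TF Q) : Finset (Q × ℕ) :=
  (((Z.vars ∪ IA).biUnion fun y => (T y).resetLocs.toFinset).image fun q => (q, 1)) ∪
  ((Z.vars.biUnion fun y => (T y).atomLocs.toFinset).biUnion fun q =>
    (Finset.Icc 2 (copyCount Z T q + 1)).image fun i => (q, i))

/-- The successor computation on nodes:  time elapse, guard intersection,
reset/deactivation with fresh variables, and renaming (canonicalization is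
semantically transparent).  `T` assigns to every variable of the node a
disjunct of the transition formula of its location on the letter `a`.  If a
chosen disjunct is `false`, the target is discarded; if all chosen disjuncts
are `true`, the successor is the special empty node. -/
def Succ (𝒜 : OneATA Q A) (Z : SemZone Q) (IA : Finset (Q × ℕ)) (a : A)
    (T : Q × ℕ → TF Q) (Z' : SemZone Q) (IA' : Finset (Q × ℕ)) : Prop :=
  (∀ y ∈ Z.vars ∪ IA, 𝒜.isTarget y.1 a (T y)) ∧
  (∀ y ∈ Z.vars ∪ IA, T y ≠ TF.ff) ∧
  ((∀ y ∈ Z.vars ∪ IA, T y = TF.tt) → (Z' = emptySemZone ∧ IA' = ∅)) ∧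
  ((¬ ∀ y ∈ Z.vars ∪ IA, T y = TF.tt) →
    IA' = succIA Z IA T ∧
    Z'.vars = succVars Z IA T ∧
    ∃ g : (Q × ℕ) → Q → ℕ,
      (∀ y ∈ Z.vars, ∀ q ∈ (T y).atomLocs, 2 ≤ g y q ∧ g y q ≤ copyCount Z T q + 1) ∧
      (∀ y₁ ∈ Z.vars, ∀ y₂ ∈ Z.vars, ∀ q, q ∈ (T y₁).atomLocs → q ∈ (T y₂).atomLocs →
        g y₁ q = g y₂ q → y₁ = y₂) ∧
      Z'.val = fun ν' => ∃ (ν : (Q × ℕ) → ℝ≥0) (d : ℝ≥0), Z.val ν ∧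
        (∀ y ∈ Z.vars, ∀ I ∈ (T y).topGuards, I.mem (ν y + d)) ∧
        (∀ y ∈ Z.vars ∪ IA, ∀ q ∈ (T y).resetLocs, ν' (q, 1) = 0) ∧
        (∀ y ∈ Z.vars, ∀ q ∈ (T y).atomLocs, ν' (q, g y q) = ν y + d))

/-- Time elapse on a single state. -/
noncomputable def stDelay (s : Q × Option ℝ≥0) (d : ℝ≥0) : Q × Option ℝ≥0 :=
  (s.1, s.2.map (· + d))

/-- `γ →^{d,a,(C₁,…,C_m)} γ'` where the disjuncts chosen in the step correspond,
via a surjection witnessing `γ ∈ ⟦(Z,IA)⟧`, to the target tuple `T` of the node. -/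
def StepMatching (𝒜 : OneATA Q A) (Z : SemZone Q) (IA : Finset (Q × ℕ))
    (γ : Config Q) (d : ℝ≥0) (a : A) (T : Q × ℕ → TF Q) (γ' : Config Q) : Prop :=
  ∃ h χ, NodeSatVia Z IA γ h ∧
    (∀ y ∈ Z.vars ∪ IA, χ (stDelay (h y) d) = T y) ∧
    𝒜.Step γ d a χ γ'

/-- Reachability in the zone graph. -/
inductive ZReach (𝒜 : OneATA Q A) :
    SemZone Q × Finset (Q × ℕ) → SemZone Q × Finset (Q × ℕ) → Prop
  | refl (n) : ZReach 𝒜 n n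
  | step {n₁ n₂ n₃} (a : A) (T) :
      ZReach 𝒜 n₁ n₂ → Succ 𝒜 n₂.1 n₂.2 a T n₃.1 n₃.2 → ZReach 𝒜 n₁ n₃

/-- A node is accepting if the locations of all its variables are accepting. -/
def AccNode (𝒜 : OneATA Q A) (Z : SemZone Q) (IA : Finset (Q × ℕ)) : Prop :=
  ∀ y ∈ Z.vars ∪ IA, y.1 ∈ 𝒜.final

/-! ### Entailment between nodes -/

/-- Node entailment `(Z,IA) ⊨_M (Z',IA')`. -/
def NodeEntails (M : ℕ) (Z : SemZone Q) (IA : Finset (Q × ℕ))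
    (Z' : SemZone Q) (IA' : Finset (Q × ℕ)) : Prop :=
  ∀ γ', NodeSat Z' IA' γ' → ∃ γ, NodeSat Z IA γ ∧ CfgEntails M γ γ'

/-- Classical region equivalence between valuations over the variable set `V`. -/
def ValRegEquiv (M : ℕ) (V : Finset (Q × ℕ)) (u u' : (Q × ℕ) → ℝ≥0) : Prop :=
  (∀ y ∈ V, ((u y ≤ (M : ℝ≥0)) ↔ (u' y ≤ (M : ℝ≥0))) ∧
    (u y ≤ (M : ℝ≥0) →
      (⌊(u y : ℝ)⌋ = ⌊(u' y : ℝ)⌋ ∧ (Int.fract (u y : ℝ) = 0 ↔ Int.fract (u' y : ℝ) = 0)))) ∧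
  (∀ y ∈ V, ∀ z ∈ V, u y ≤ (M : ℝ≥0) → u z ≤ (M : ℝ≥0) →
    (Int.fract (u y : ℝ) ≤ Int.fract (u z : ℝ) ↔
      Int.fract (u' y : ℝ) ≤ Int.fract (u' z : ℝ)))

/-- The bounded entailment check `(Z,IA) ⊨ᵇ_M (Z',IA')`, for zones over the same
variables, using the identity correspondence of variables. -/
def BoundedEntails (M : ℕ) (Z : SemZone Q) (IA : Finset (Q × ℕ))
    (Z' : SemZone Q) (IA' : Finset (Q × ℕ)) : Prop :=
  IA ⊆ IA' ∧ ∀ u', Z'.val u' → ∃ u, Z.val u ∧ ValRegEquiv M Z.vars u u'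

/-! ### Syntactic zones -/

/-- Comparison relations in zone constraints. -/
inductive ZRel | lt | le | gt | ge

def ZRel.holds : ZRel → ℝ → ℝ → Prop
  | .lt, x, y => x < y
  | .le, x, y => x ≤ y
  | .gt, x, y => x > y
  | .ge, x, y => x ≥ y

/-- A zone constraint: `y ∼ k` or `y − x ∼ k` with `k ∈ ℤ`. -/
inductive ZConstr (Q : Type*) where
  | single (y : Q × ℕ) (r : ZRel) (k : ℤ)
  | diff (y x : Q × ℕ) (r : ZRel) (k : ℤ)

def ZConstr.holds (ν : (Q × ℕ) → ℝ≥0) : ZConstr Q → Prop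
  | .single y r k => r.holds (ν y : ℝ) (k : ℝ)
  | .diff y x r k => r.holds ((ν y : ℝ) - (ν x : ℝ)) (k : ℝ)

/-- The variables occurring in a constraint. -/
def ZConstr.varsIn : ZConstr Q → List (Q × ℕ)
  | .single y _ _ => [y]
  | .diff y x _ _ => [y, x]

/-- A (syntactic) zone: a finite set of variables and a finite conjunction of
constraints. -/
structure Zone (Q : Type*) where
  vars : Finset (Q × ℕ)
  constrs : List (ZConstr Q)

def Zone.satBy (Z : Zone Q) (ν : (Q × ℕ) → ℝ≥0) : Prop :=
  ∀ c ∈ Z.constrs, c.holds ν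

/-- Constraints only mention variables of the zone. -/
def Zone.wf (Z : Zone Q) : Prop :=
  ∀ c ∈ Z.constrs, ∀ v ∈ c.varsIn, v ∈ Z.vars

/-- The semantic zone of a syntactic zone. -/
def Zone.toSem (Z : Zone Q) : SemZone Q := ⟨Z.vars, Z.satBy⟩

/-! ### The `N'_r` sets for the entailment check -/

/-- Location preserving one-to-one mapping from `Var(Z)` to `Var(Z')`. -/
def LocPresInj (Z Z' : Zone Q) (r : Q × ℕ → Q × ℕ) : Prop :=
  Set.InjOn r ↑Z.vars ∧ (∀ y ∈ Z.vars, r y ∈ Z'.vars) ∧ ∀ y ∈ Z.vars, (r y).1 = y.1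

/-- `γ' ∈ N'_r` : `γ'` satisfies `(Z', IA')` via a surjection whose induced
valuation, transported back along `r`, is region equivalent to no valuation
satisfying `Z`. -/
def InNr (M : ℕ) (Z Z' : Zone Q) (IA' : Finset (Q × ℕ))
    (r : Q × ℕ → Q × ℕ) (γ' : Config Q) : Prop :=
  ∃ (h' : Q × ℕ → Q × Option ℝ≥0) (ν' : (Q × ℕ) → ℝ≥0),
    (∀ y ∈ Z'.vars ∪ IA', (h' y).1 = y.1) ∧
    (∀ y ∈ Z'.vars ∪ IA', h' y ∈ γ') ∧
    (∀ s ∈ γ', ∃ y ∈ Z'.vars ∪ IA', h' y = s) ∧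
    (∀ y ∈ IA', (h' y).2 = none) ∧
    (∀ y ∈ Z'.vars, (h' y).2 = some (ν' y)) ∧
    Z'.satBy ν' ∧
    ∀ ν, Z.satBy ν → ¬ ValRegEquiv M Z.vars ν (fun y => ν' (r y))

end ZoneDefs


/-! ## The zones `Z_φ` and `Z'_φ` constructed from a monotone 3-CNF formula -/

/-- The two locations `q_x` and `q_y`. -/
inductive XY | qx | qy
deriving DecidableEq

/-- The zone variables used in the reduction, for a formula with `m` clauses:
`px_j, py_j, nx_j, ny_j` (dummy clauses), `x^i_j, y^i_j` (clause literals) for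
`Z'_φ`, and `x⁺_j, y⁺_j, x⁻_j, y⁻_j` for `Z_φ`. -/
inductive MVar (m : ℕ) where
  | px (j : Fin 3)
  | py (j : Fin 3)
  | nx (j : Fin 3)
  | ny (j : Fin 3)
  | xc (i : Fin m) (j : Fin 3)
  | yc (i : Fin m) (j : Fin 3)
  | xp (j : Fin 3)
  | yp (j : Fin 3)
  | xm (j : Fin 3)
  | ym (j : Fin 3)
deriving DecidableEq

section Mono

variable {m : ℕ}

/-- The location of each variable. -/
def MVar.loc : MVar m → XY
  | .px _ | .nx _ | .xc _ _ | .xp _ | .xm _ => .qx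
  | .py _ | .ny _ | .yc _ _ | .yp _ | .ym _ => .qy

def MVar.inZ : MVar m → Prop
  | .xp _ | .yp _ | .xm _ | .ym _ => True
  | _ => False

/-- The variables of `Z_φ`. -/
def ZVars (m : ℕ) : Set (MVar m) := {y | y.inZ}

/-- The variables of `Z'_φ`. -/
def Z'Vars (m : ℕ) : Set (MVar m) := {y | ¬ y.inZ}

/-- `γ` satisfies the node `(Z, ∅)` (zone given semantically by the predicate
`P` on valuations, over the variable set `V`) via the surjection `h`. -/
def MSat (V : Set (MVar m)) (P : (MVar m → ℝ≥0) → Prop) (γ : Config XY)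
    (h : MVar m → XY × Option ℝ≥0) : Prop :=
  (∀ y ∈ V, (h y).1 = y.loc) ∧
  (∀ y ∈ V, h y ∈ γ) ∧
  (∀ s ∈ γ, ∃ y ∈ V, h y = s) ∧
  ∃ ν : MVar m → ℝ≥0, (∀ y ∈ V, (h y).2 = some (ν y)) ∧ P ν

/-- The constraints of the zone `Z_φ` (with `k` positive clauses and `m`
clauses in total). -/
def ZphiSat (m k : ℕ) (ν : MVar m → ℝ≥0) : Prop :=
  (∀ j : Fin 3, 0 ≤ (ν (.yp j) : ℝ) - ν (.xp j) ∧ (ν (.yp j) : ℝ) - ν (.xp j) ≤ 1) ∧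
  (∀ j : Fin 3, 1 < (ν (.ym j) : ℝ) - ν (.xm j) ∧ (ν (.ym j) : ℝ) - ν (.xm j) ≤ 2) ∧
  (∀ j : Fin 2, 1 ≤ (ν (.xp j.succ) : ℝ) - ν (.yp j.castSucc) ∧
      (ν (.xp j.succ) : ℝ) - ν (.yp j.castSucc) ≤ 5) ∧
  (∀ j : Fin 2, 1 ≤ (ν (.xm j.succ) : ℝ) - ν (.ym j.castSucc) ∧
      (ν (.xm j.succ) : ℝ) - ν (.ym j.castSucc) ≤ 5) ∧
  ((ν (.yp 2) : ℝ) < 14 * ((k : ℝ) + 1) - 2) ∧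
  ((ν (.xm 0) : ℝ) > 14 * ((k : ℝ) + 1) - 2) ∧
  ((ν (.ym 2) : ℝ) - ν (.xp 0) < 14 * ((m : ℝ) + 2) - 6)

/-- The constraints of the zone `Z'_φ`, for a monotone 3-CNF formula whose
`i`-th clause has literals on the propositional variables `lits i 0`,
`lits i 1`, `lits i 2`. -/
def Z'phiSat (m : ℕ) {PV : Type*} (lits : Fin m → Fin 3 → PV)
    (ν : MVar m → ℝ≥0) : Prop :=
  (∀ j : Fin 3, (ν (.px j) : ℝ) = 3 * (j : ℕ) ∧ (ν (.py j) : ℝ) = 3 * (j : ℕ)) ∧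
  (∀ j : Fin 3, (ν (.nx j) : ℝ) = 14 * ((m : ℝ) + 1) + 3 * (j : ℕ) ∧
      (ν (.ny j) : ℝ) = 14 * ((m : ℝ) + 1) + 3 * (j : ℕ) + 2) ∧
  (∀ (i : Fin m) (j : Fin 3),
      14 * ((i : ℕ) + 1 : ℝ) + 3 * (j : ℕ) ≤ (ν (.xc i j) : ℝ) ∧
      (ν (.xc i j) : ℝ) ≤ 14 * ((i : ℕ) + 1 : ℝ) + 3 * (j : ℕ) + 2 ∧
      14 * ((i : ℕ) + 1 : ℝ) + 3 * (j : ℕ) ≤ (ν (.yc i j) : ℝ) ∧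
      (ν (.yc i j) : ℝ) ≤ 14 * ((i : ℕ) + 1 : ℝ) + 3 * (j : ℕ) + 2 ∧
      (ν (.xc i j) : ℝ) ≤ (ν (.yc i j) : ℝ)) ∧
  (∀ (i i' : Fin m) (j j' : Fin 3), lits i j = lits i' j' →
      (ν (.xc i' j') : ℝ) - ν (.xc i j) = 14 * (((i' : ℕ) : ℝ) - ((i : ℕ) : ℝ)) +
        3 * (((j' : ℕ) : ℝ) - ((j : ℕ) : ℝ)) ∧
      (ν (.yc i' j') : ℝ) - ν (.yc i j) = 14 * (((i' : ℕ) : ℝ) - ((i : ℕ) : ℝ)) +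
        3 * (((j' : ℕ) : ℝ) - ((j : ℕ) : ℝ)))

/-- The (real) value of a state of a configuration. -/
noncomputable def sval (s : XY × Option ℝ≥0) : ℝ := ((s.2.getD 0 : ℝ≥0) : ℝ)

/-- The assignment `α_{γ'}` extracted from a surjection `h'` witnessing that a
configuration satisfies `(Z'_φ, ∅)`: a propositional variable is true iff the
difference `y − x` of (one of) its literal occurrences exceeds 1. -/
def alphaOf {PV : Type*} (lits : Fin m → Fin 3 → PV)
    (h' : MVar m → XY × Option ℝ≥0) (p : PV) : Prop :=
  ∃ (i : Fin m) (j : Fin 3), lits i j = p ∧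
    1 < sval (h' (.yc i j)) - sval (h' (.xc i j))

/-- The assignment `α` falsifies clause `C_i` (clauses `C_1, …, C_k` are
positive, the rest negative): all of its literals are false. -/
def Falsifies {PV : Type*} (k : ℕ) (lits : Fin m → Fin 3 → PV)
    (α : PV → Prop) (i : Fin m) : Prop :=
  if (i : ℕ) < k then ∀ j : Fin 3, ¬ α (lits i j) else ∀ j : Fin 3, α (lits i j)

/-- The monotone 3-CNF formula is satisfiable. -/
def MonoSatisfiable {PV : Type*} (k : ℕ) (lits : Fin m → Fin 3 → PV) : Prop :=
  ∃ α : PV → Prop, ∀ i : Fin m, ¬ Falsifies k lits α i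

end Mono

/-! The values of `Z'_φ` are laid out in blocks of length 14: block `0` holds
`px, py`, block `i + 1` holds the literal variables of clause `C_i` and block
`m + 1` holds `nx, ny`. Slot `j` of block `t` is the interval
`[14 t + 3 j, 14 t + 3 j + 2]`; consecutive blocks are more than `5` apart, so a
chain of `Z_φ` cannot leave a block, and inside a block it is forced onto the
slots `0, 1, 2` in order. Hence a subset satisfying `Z_φ` amounts to a block
`P` whose three slots have width `≤ 1` (a falsified positive clause, or the
dummy block `0`) before a block `N` whose slots have width `> 1` (a falsified
negative clause, or the dummy block `m + 1`); the last constraint of `Z_φ`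
excludes that both are dummies. -/

def InSlot (t : ℕ) (s : Fin 3) (u : ℝ) : Prop :=
  14 * (t : ℝ) + 3 * (s : ℕ) ≤ u ∧ u ≤ 14 * (t : ℝ) + 3 * (s : ℕ) + 2

namespace InSlot

variable {t t' : ℕ} {s s' : Fin 3} {u v : ℝ}

lemma mem_block (hu : InSlot t s u) : 14 * (t : ℝ) ≤ u ∧ u ≤ 14 * (t : ℝ) + 8 := by
  have hs : ((s : ℕ) : ℝ) ≤ 2 := by exact_mod_cast Nat.le_of_lt_succ s.isLt
  constructor <;> linarith [hu.1, hu.2]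

lemma block_eq (hu : InSlot t s u) (hv : InSlot t' s' v) (h0 : u ≤ v) (h5 : v ≤ u + 5) :
    t = t' := by
  obtain ⟨hu₁, hu₂⟩ := hu.mem_block
  obtain ⟨hv₁, hv₂⟩ := hv.mem_block
  have h₁ : (t : ℝ) < t' + 1 := by linarith
  have h₂ : (t' : ℝ) < t + 1 := by linarith
  norm_cast at h₁ h₂
  omega

lemma slot_le (hu : InSlot t s u) (hv : InSlot t s' v) (h : u ≤ v) : s ≤ s' := by
  have h' : ((s : ℕ) : ℝ) < s' + 1 := by linarith [hu.1, hv.2]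
  norm_cast at h'
  exact Fin.le_def.2 (Nat.lt_succ_iff.1 h')

end InSlot

inductive Block (m : ℕ) where
  | first
  | clause (i : Fin m)
  | last

namespace Block

variable {m : ℕ} {PV : Type*} {lits : Fin m → Fin 3 → PV} {ν' : MVar m → ℝ≥0}

def idx : Block m → ℕ
  | first => 0
  | clause i => i + 1
  | last => m + 1

def var : Block m → XY → Fin 3 → MVar m
  | first, .qx, j => .px j
  | first, .qy, j => .py j
  | clause i, .qx, j => .xc i j
  | clause i, .qy, j => .yc i j
  | last, .qx, j => .nx j
  | last, .qy, j => .ny j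

def gap (b : Block m) (ν' : MVar m → ℝ≥0) (j : Fin 3) : ℝ :=
  ν' (b.var .qy j) - ν' (b.var .qx j)

lemma idx_le (b : Block m) : b.idx ≤ m + 1 := by
  cases b <;> simp only [idx] <;> omega

lemma idx_injective : Function.Injective (idx : Block m → ℕ) := by
  intro b b' h
  cases b <;> cases b' <;> simp only [idx, clause.injEq] at h ⊢ <;> omega

@[simp]
lemma loc_var (b : Block m) (l : XY) (j : Fin 3) : (b.var l j).loc = l := by
  cases b <;> cases l <;> rfl

lemma not_inZ_var (b : Block m) (l : XY) (j : Fin 3) : ¬ (b.var l j).inZ := by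
  cases b <;> cases l <;> exact id

lemma exists_eq_var {w : MVar m} (hw : ¬ w.inZ) : ∃ b l j, w = Block.var b l j := by
  cases w with
  | px j => exact ⟨first, .qx, j, rfl⟩
  | py j => exact ⟨first, .qy, j, rfl⟩
  | nx j => exact ⟨last, .qx, j, rfl⟩
  | ny j => exact ⟨last, .qy, j, rfl⟩
  | xc i j => exact ⟨clause i, .qx, j, rfl⟩
  | yc i j => exact ⟨clause i, .qy, j, rfl⟩
  | _ => exact absurd trivial hw

section Values

variable (hZ' : Z'phiSat m lits ν')
include hZ'

lemma inSlot_var (b : Block m) (l : XY) (j : Fin 3) : InSlot b.idx j (ν' (b.var l j)) := by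
  obtain ⟨hp, hn, hc, -⟩ := hZ'
  unfold InSlot
  cases b with
  | first => cases l <;> simp only [idx, var, hp j] <;> norm_num
  | clause i =>
    obtain ⟨hx₁, hx₂, hy₁, hy₂, -⟩ := hc i j
    cases l <;> simp only [idx, var] <;> push_cast <;> constructor <;> assumption
  | last => cases l <;> simp only [idx, var, hn j] <;> push_cast <;> constructor <;> linarith

lemma var_qx_le_var_qy (b : Block m) (j : Fin 3) : ν' (b.var .qx j) ≤ ν' (b.var .qy j) := by
  obtain ⟨hp, hn, hc, -⟩ := hZ'
  cases b with
  | first => exact NNReal.coe_le_coe.1 (by simp only [var, hp j, le_refl])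
  | clause i => exact NNReal.coe_le_coe.1 (hc i j).2.2.2.2
  | last => exact NNReal.coe_le_coe.1 (by simp only [var, hn j]; linarith)

lemma gap_first (j : Fin 3) : first.gap ν' j = 0 := by
  simp only [gap, var, hZ'.1 j, sub_self]

lemma gap_last (j : Fin 3) : last.gap ν' j = 2 := by
  simp only [gap, var, hZ'.2.1 j]
  ring

lemma gap_nonneg (b : Block m) (j : Fin 3) : 0 ≤ b.gap ν' j :=
  sub_nonneg.2 (NNReal.coe_le_coe.2 (var_qx_le_var_qy hZ' b j))

lemma gap_le_two (b : Block m) (j : Fin 3) : b.gap ν' j ≤ 2 := by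
  have hx := (inSlot_var hZ' b .qx j).1
  have hy := (inSlot_var hZ' b .qy j).2
  unfold gap
  linarith

lemma var_qx_succ_sub_var_qy (b : Block m) (j : Fin 2) :
    1 ≤ (ν' (b.var .qx j.succ) : ℝ) - ν' (b.var .qy j.castSucc) ∧
      (ν' (b.var .qx j.succ) : ℝ) - ν' (b.var .qy j.castSucc) ≤ 5 := by
  obtain ⟨hx₁, hx₂⟩ := inSlot_var hZ' b .qx j.succ
  obtain ⟨hy₁, hy₂⟩ := inSlot_var hZ' b .qy j.castSucc
  have hj : ((j.succ : ℕ) : ℝ) = (j.castSucc : ℕ) + 1 := by simp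
  rw [hj] at hx₁ hx₂
  constructor <;> linarith

lemma eq_and_slot_le {b b' : Block m} {l l' : XY} {s s' : Fin 3} {u v : ℝ}
    (hu : u = ν' (b.var l s)) (hv : v = ν' (b'.var l' s')) (h0 : u ≤ v) (h5 : v ≤ u + 5) :
    b = b' ∧ s ≤ s' := by
  have hsu := inSlot_var hZ' b l s
  have hsv := inSlot_var hZ' b' l' s'
  rw [← hu] at hsu
  rw [← hv] at hsv
  obtain rfl := idx_injective (hsu.block_eq hsv h0 h5)
  exact ⟨rfl, hsu.slot_le hsv h0⟩

/-- In a common slot the `x`-value is the smaller one. -/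
lemma eq_and_slot_lt {b b' : Block m} {s s' : Fin 3} {u v : ℝ}
    (hu : u = ν' (b.var .qy s)) (hv : v = ν' (b'.var .qx s')) (h1 : u + 1 ≤ v)
    (h5 : v ≤ u + 5) : b = b' ∧ s < s' := by
  obtain ⟨rfl, hle⟩ := eq_and_slot_le hZ' hu hv (by linarith) h5
  refine ⟨rfl, lt_of_le_of_ne hle ?_⟩
  rintro rfl
  have := NNReal.coe_le_coe.2 (var_qx_le_var_qy hZ' b s)
  linarith

lemma exists_of_chain {X Y : Fin 3 → ℝ}
    (hX : ∀ j, ∃ b s, X j = ν' (Block.var b .qx s))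
    (hY : ∀ j, ∃ b s, Y j = ν' (Block.var b .qy s))
    (hXY : ∀ j, 0 ≤ Y j - X j ∧ Y j - X j ≤ 2)
    (hYX : ∀ j : Fin 2, 1 ≤ X j.succ - Y j.castSucc ∧ X j.succ - Y j.castSucc ≤ 5) :
    ∃ B : Block m, ∀ j, X j = ν' (B.var .qx j) ∧ Y j = ν' (B.var .qy j) := by
  choose bX sX hX using hX
  choose bY sY hY using hY
  have g₀ := hYX 0
  have g₁ := hYX 1
  simp only [Fin.succ_zero_eq_one, Fin.castSucc_zero, Fin.succ_one_eq_two,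
    Fin.castSucc_one] at g₀ g₁
  obtain ⟨e₀, l₀⟩ := eq_and_slot_le hZ' (hX 0) (hY 0) (by linarith [hXY 0]) (by linarith [hXY 0])
  obtain ⟨e₁, l₁⟩ := eq_and_slot_lt hZ' (hY 0) (hX 1) (by linarith) (by linarith)
  obtain ⟨e₂, l₂⟩ := eq_and_slot_le hZ' (hX 1) (hY 1) (by linarith [hXY 1]) (by linarith [hXY 1])
  obtain ⟨e₃, l₃⟩ := eq_and_slot_lt hZ' (hY 1) (hX 2) (by linarith) (by linarith)
  obtain ⟨e₄, l₄⟩ := eq_and_slot_le hZ' (hX 2) (hY 2) (by linarith [hXY 2]) (by linarith [hXY 2])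
  have hb : ∀ j, bX j = bX 0 ∧ bY j = bX 0 := by
    intro j
    fin_cases j
    · exact ⟨rfl, e₀.symm⟩
    · exact ⟨(e₀.trans e₁).symm, (e₀.trans (e₁.trans e₂)).symm⟩
    · exact ⟨(e₀.trans (e₁.trans (e₂.trans e₃))).symm,
        (e₀.trans (e₁.trans (e₂.trans (e₃.trans e₄)))).symm⟩
  have hs : ∀ j, sX j = j ∧ sY j = j := by
    have := (sY 2).isLt
    rw [Fin.le_def] at l₀ l₂ l₄
    rw [Fin.lt_def] at l₁ l₃
    intro j
    fin_cases j <;> simp only [Fin.zero_eta, Fin.mk_one, Fin.reduceFinMk, Fin.isValue, Fin.ext_iff] <;> omega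
  exact ⟨bX 0, fun j => by rw [hX j, hY j, (hb j).1, (hb j).2, (hs j).1, (hs j).2]; simp⟩

end Values

end Block

section Reduction

variable {m k : ℕ} {PV : Type*} {lits : Fin m → Fin 3 → PV} {ν' : MVar m → ℝ≥0}

/-- `P` carries the positive chain `x⁺, y⁺` of `Z_φ` and `N` its negative chain `x⁻, y⁻`. -/
def Admissible (k : ℕ) (ν' : MVar m → ℝ≥0) (P N : Block m) : Prop :=
  (∀ j, P.gap ν' j ≤ 1) ∧ (∀ j, 1 < N.gap ν' j) ∧ P.idx ≤ k ∧ k < N.idx ∧ N.idx ≤ P.idx + m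

def Block.embed (P N : Block m) : MVar m → MVar m
  | .xp j => P.var .qx j
  | .yp j => P.var .qy j
  | .xm j => N.var .qx j
  | .ym j => N.var .qy j
  | w => w

lemma Block.not_inZ_embed (P N : Block m) {z : MVar m} (hz : z.inZ) : ¬ (P.embed N z).inZ := by
  cases z <;> first | exact (hz : False).elim | exact not_inZ_var _ _ _

lemma Block.loc_embed (P N : Block m) {z : MVar m} (hz : z.inZ) :
    (P.embed N z).loc = z.loc := by
  cases z <;> first | exact (hz : False).elim | exact loc_var _ _ _

lemma zphiSat_congr {ν₁ ν₂ : MVar m → ℝ≥0} (h : ∀ z ∈ ZVars m, ν₁ z = ν₂ z)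
    (h₁ : ZphiSat m k ν₁) : ZphiSat m k ν₂ := by
  have hxp : ∀ j, ν₁ (.xp j) = ν₂ (.xp j) := fun j => h _ trivial
  have hyp : ∀ j, ν₁ (.yp j) = ν₂ (.yp j) := fun j => h _ trivial
  have hxm : ∀ j, ν₁ (.xm j) = ν₂ (.xm j) := fun j => h _ trivial
  have hym : ∀ j, ν₁ (.ym j) = ν₂ (.ym j) := fun j => h _ trivial
  simpa only [ZphiSat, hxp, hyp, hxm, hym] using h₁

lemma zphiSat_comp_embed_iff (hZ' : Z'phiSat m lits ν') (P N : Block m) :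
    ZphiSat m k (ν' ∘ P.embed N) ↔ Admissible k ν' P N := by
  obtain ⟨hPx₁, -⟩ := (Block.inSlot_var hZ' P .qx 0).mem_block
  obtain ⟨hPy₁, hPy₂⟩ := (Block.inSlot_var hZ' P .qy 2).mem_block
  obtain ⟨hNx₁, hNx₂⟩ := (Block.inSlot_var hZ' N .qx 0).mem_block
  obtain ⟨-, hNy₂⟩ := (Block.inSlot_var hZ' N .qy 2).mem_block
  have hPy₁' := (Block.inSlot_var hZ' P .qy 2).1
  have hNx₂' := (Block.inSlot_var hZ' N .qx 0).2
  norm_num at hPy₁' hNx₂'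
  simp only [ZphiSat, Function.comp_apply, Block.embed]
  constructor
  · rintro ⟨hPgap, hNgap, -, -, hPk, hkN, hNP⟩
    refine ⟨fun j => (hPgap j).2, fun j => (hNgap j).1, ?_, ?_, ?_⟩
    · have : (P.idx : ℝ) < k + 1 := by linarith
      exact_mod_cast Nat.lt_succ_iff.1 (by exact_mod_cast this)
    · have : (k : ℝ) < N.idx := by linarith
      exact_mod_cast this
    · by_contra! hlt
      have := N.idx_le
      obtain rfl : P = .first := Block.idx_injective (by omega : P.idx = 0)
      obtain rfl : N = .last := Block.idx_injective (by omega : N.idx = m + 1)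
      simp only [Block.var, (hZ'.1 0).1, (hZ'.2.1 2).2] at hNP
      norm_num at hNP
      linarith
  · rintro ⟨hPgap, hNgap, hPk, hkN, hNP⟩
    have hPk' : (P.idx : ℝ) ≤ k := by exact_mod_cast hPk
    have hkN' : (k : ℝ) + 1 ≤ N.idx := by exact_mod_cast hkN
    have hNP' : (N.idx : ℝ) ≤ P.idx + m := by exact_mod_cast hNP
    exact ⟨fun j => ⟨Block.gap_nonneg hZ' P j, hPgap j⟩,
      fun j => ⟨hNgap j, Block.gap_le_two hZ' N j⟩,
      Block.var_qx_succ_sub_var_qy hZ' P, Block.var_qx_succ_sub_var_qy hZ' N,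
      by linarith, by linarith, by linarith⟩

section Assignment

variable {h' : MVar m → XY × Option ℝ≥0} (hν' : ∀ y ∈ Z'Vars m, (h' y).2 = some (ν' y))
  (hZ' : Z'phiSat m lits ν')
include hν' hZ'

/-- By `(4')` all occurrences of a propositional variable have the same gap, so
`α_{γ'}` reads the truth value of a literal off its own slot. -/
lemma alphaOf_lits_iff (i : Fin m) (j : Fin 3) :
    alphaOf lits h' (lits i j) ↔ 1 < (Block.clause i).gap ν' j := by
  have hsval : ∀ w, ¬ w.inZ → sval (h' w) = ν' w := fun w hw => by rw [sval, hν' w hw, Option.getD_some]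
  constructor
  · rintro ⟨i', j', hl, hgt⟩
    rw [hsval _ id, hsval _ id] at hgt
    obtain ⟨hx, hy⟩ := hZ'.2.2.2 i' i j' j hl
    simp only [Block.gap, Block.var]
    linarith
  · intro h
    refine ⟨i, j, rfl, ?_⟩
    rwa [hsval _ id, hsval _ id]

lemma falsifies_alphaOf_iff (i : Fin m) :
    Falsifies k lits (alphaOf lits h') i ↔
      if (i : ℕ) < k then ∀ j, (Block.clause i).gap ν' j ≤ 1
      else ∀ j, 1 < (Block.clause i).gap ν' j := by
  simp only [Falsifies, alphaOf_lits_iff hν' hZ', not_lt]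

lemma exists_admissible_iff (hkm : k ≤ m) :
    (∃ P N : Block m, Admissible k ν' P N) ↔ ∃ i, Falsifies k lits (alphaOf lits h') i := by
  simp only [falsifies_alphaOf_iff hν' hZ']
  constructor
  · rintro ⟨P, N, hP, hN, hPk, hkN, hNP⟩
    cases N with
    | first => exact absurd hkN (Nat.not_lt_zero k)
    | clause i => exact ⟨i, by rw [if_neg (by simp only [Block.idx] at hkN; omega)]; exact hN⟩
    | last =>
      cases P with
      | first => simp only [Block.idx] at hNP; omega
      | clause i => exact ⟨i, by rw [if_pos (by simp only [Block.idx] at hPk; omega)]; exact hP⟩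
      | last => simp only [Block.idx] at hPk; omega
  · rintro ⟨i, hi⟩
    have := i.isLt
    split_ifs at hi with hik
    · exact ⟨.clause i, .last, hi, fun j => by rw [Block.gap_last hZ']; norm_num,
        by simp only [Block.idx]; omega, by simp only [Block.idx]; omega,
        by simp only [Block.idx]; omega⟩
    · exact ⟨.first, .clause i, fun j => by rw [Block.gap_first hZ']; norm_num, hi,
        by simp only [Block.idx]; omega, by simp only [Block.idx]; omega,
        by simp only [Block.idx]; omega⟩

end Assignment

section Configurations

variable {γ' γ'' : Config XY} {h' h : MVar m → XY × Option ℝ≥0}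

lemma exists_var_eq_of_subset (hloc' : ∀ y ∈ Z'Vars m, (h' y).1 = y.loc)
    (hsurj' : ∀ s ∈ γ', ∃ y ∈ Z'Vars m, h' y = s)
    (hν' : ∀ y ∈ Z'Vars m, (h' y).2 = some (ν' y)) (hsub : γ'' ⊆ γ') {ν : MVar m → ℝ≥0}
    (hloc : ∀ z ∈ ZVars m, (h z).1 = z.loc) (hmem : ∀ z ∈ ZVars m, h z ∈ γ'')
    (hν : ∀ z ∈ ZVars m, (h z).2 = some (ν z)) :
    ∀ z ∈ ZVars m, ∃ b s, (ν z : ℝ) = ν' (Block.var b z.loc s) := by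
  intro z hz
  obtain ⟨w, hw, hwz⟩ := hsurj' _ (hsub (hmem z hz))
  obtain ⟨b, l, s, rfl⟩ := Block.exists_eq_var hw
  have hl : l = z.loc := by rw [← Block.loc_var b l s, ← hloc' _ hw, hwz, hloc z hz]
  have hv : ν' (b.var l s) = ν z := Option.some.inj (by rw [← hν' _ hw, hwz, hν z hz])
  exact ⟨b, s, by rw [← hl, hv]⟩

lemma exists_blocks_of_subset_msat (hloc' : ∀ y ∈ Z'Vars m, (h' y).1 = y.loc)
    (hsurj' : ∀ s ∈ γ', ∃ y ∈ Z'Vars m, h' y = s)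
    (hν' : ∀ y ∈ Z'Vars m, (h' y).2 = some (ν' y)) (hZ' : Z'phiSat m lits ν')
    (hsub : γ'' ⊆ γ') (hsat : MSat (ZVars m) (ZphiSat m k) γ'' h) :
    ∃ P N : Block m, ZphiSat m k (ν' ∘ P.embed N) := by
  obtain ⟨hloc, hmem, -, ν, hν, hZ⟩ := hsat
  have hval := exists_var_eq_of_subset hloc' hsurj' hν' hsub hloc hmem hν
  obtain ⟨P, hP⟩ := Block.exists_of_chain hZ' (X := fun j => ν (.xp j))
    (Y := fun j => ν (.yp j)) (fun j => hval _ trivial) (fun j => hval _ trivial)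
    (fun j => ⟨(hZ.1 j).1, by linarith [(hZ.1 j).2]⟩) hZ.2.2.1
  obtain ⟨N, hN⟩ := Block.exists_of_chain hZ' (X := fun j => ν (.xm j))
    (Y := fun j => ν (.ym j)) (fun j => hval _ trivial) (fun j => hval _ trivial)
    (fun j => ⟨by linarith [(hZ.2.1 j).1], (hZ.2.1 j).2⟩) hZ.2.2.2.1
  refine ⟨P, N, zphiSat_congr (fun z hz => ?_) hZ⟩
  cases z with
  | xp j => exact NNReal.coe_inj.1 (hP j).1
  | yp j => exact NNReal.coe_inj.1 (hP j).2
  | xm j => exact NNReal.coe_inj.1 (hN j).1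
  | ym j => exact NNReal.coe_inj.1 (hN j).2
  | _ => exact (hz : False).elim

lemma exists_subset_msat_of_blocks (hloc' : ∀ y ∈ Z'Vars m, (h' y).1 = y.loc)
    (hmem' : ∀ y ∈ Z'Vars m, h' y ∈ γ') (hν' : ∀ y ∈ Z'Vars m, (h' y).2 = some (ν' y))
    {P N : Block m} (hZ : ZphiSat m k (ν' ∘ P.embed N)) :
    ∃ γ'', γ'' ⊆ γ' ∧ ∃ h, MSat (ZVars m) (ZphiSat m k) γ'' h := by
  refine ⟨γ'.filter (fun s => ∃ z ∈ ZVars m, h' (P.embed N z) = s), Finset.filter_subset _ _,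
    h' ∘ P.embed N, fun z hz => ?_, fun z hz => ?_, fun s hs => (Finset.mem_filter.1 hs).2,
    ν' ∘ P.embed N, fun z hz => hν' _ (P.not_inZ_embed N hz), hZ⟩
  · rw [Function.comp_apply, hloc' _ (P.not_inZ_embed N hz), P.loc_embed N hz]
  · exact Finset.mem_filter.2 ⟨hmem' _ (P.not_inZ_embed N hz), z, hz, rfl⟩

end Configurations

end Reduction

/-- For every `γ'` satisfying `(Z'_φ, ∅)` via `h'`, there is a
subset `γ'' ⊆ γ'` satisfying `(Z_φ, ∅)` iff `α_{γ'}` falsifies at least one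
clause of `φ`. -/
theorem statement17 {PV : Type*} (m k : ℕ) (hkm : k ≤ m)
    (lits : Fin m → Fin 3 → PV) (γ' : Config XY)
    (h' : MVar m → XY × Option ℝ≥0)
    (hsat : MSat (Z'Vars m) (Z'phiSat m lits) γ' h') :
    (∃ γ'', γ'' ⊆ γ' ∧ ∃ h, MSat (ZVars m) (ZphiSat m k) γ'' h) ↔
      ∃ i : Fin m, Falsifies k lits (alphaOf lits h') i := by
  obtain ⟨hloc', hmem', hsurj', ν', hν', hZ'⟩ := hsat
  rw [← exists_admissible_iff hν' hZ' hkm]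
  constructor
  · rintro ⟨γ'', hsub, h, hZ⟩
    obtain ⟨P, N, hPN⟩ := exists_blocks_of_subset_msat hloc' hsurj' hν' hZ' hsub hZ
    exact ⟨P, N, (zphiSat_comp_embed_iff hZ' P N).1 hPN⟩
  · rintro ⟨P, N, hPN⟩
    exact exists_subset_msat_of_blocks hloc' hmem' hν' ((zphiSat_comp_embed_iff hZ' P N).2 hPN)

end ATAPaper
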